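/- (Smallest required time slot overhead for CS based adaptive CSI acquisition.) Let Φ₁ ∈ ℂ^{G×M} with M ≥ G + 1 and no zero column, and let D̃ be a matrix with rank(D̃) ≤ S_a. If the uniqueness condition of Theorem 1 holds, namely 2 S_a < spark(Φ₁) − 1 + rank(D̃), then G ≥ S_a + 1. Hence the smallest time slot overhead guaranteeing the uniqueness condition is G = S_a + 1. -/

import Mathlib

/-- The spark of a matrix `Φ`: the smallest cardinality of a (necessarily nonempty)
set of columns of `Φ` that is linearly dependent. -/
noncomputable def spark {G M : ℕ} (Φ : Matrix (Fin G) (Fin M) ℂ) : ℕ :=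
  sInf {n | ∃ s : Finset (Fin M), s.card = n ∧
    ¬ LinearIndependent ℂ (fun j : s => (fun i => Φ i (j : Fin M)))}

theorem spark_le_of_lt_of_le {G M n : ℕ} (Φ : Matrix (Fin G) (Fin M) ℂ)
    (hG : G < n) (hn : n ≤ M) : spark Φ ≤ n := by
  obtain ⟨s, -, hs⟩ := Finset.exists_subset_card_eq (s := (Finset.univ : Finset (Fin M)))
    (by simpa using hn)
  refine Nat.sInf_le ⟨s, hs, fun hli => ?_⟩
  have hcard := hli.fintype_card_le_finrank
  rw [Module.finrank_fintype_fun_eq_card, Fintype.card_coe, hs, Fintype.card_fin] at hcard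
  omega

theorem smallest_time_slot_overhead_general {G M P Sa : ℕ}
    (Φ₁ : Matrix (Fin G) (Fin M) ℂ) (hM : G + 1 ≤ M)
    (D' : Matrix (Fin G) (Fin P) ℂ) (hrank : D'.rank ≤ Sa)
    (hcond : 2 * Sa < spark Φ₁ - 1 + D'.rank) :
    Sa + 1 ≤ G := by
  have hspark : spark Φ₁ ≤ G + 1 := spark_le_of_lt_of_le Φ₁ G.lt_succ_self hM
  omega

/-- for `Φ₁ ∈ ℂ^{G×M}` with `M ≥ G + 1` and no zero column, and a
matrix `D'` with `rank(D') ≤ S_a`, the uniqueness condition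
`2 S_a < spark(Φ₁) - 1 + rank(D')` of Theorem 1 forces `G ≥ S_a + 1`. -/
theorem smallest_time_slot_overhead {G M P Sa : ℕ}
    (Φ₁ : Matrix (Fin G) (Fin M) ℂ) (hM : G + 1 ≤ M)
    (hcol : ∀ j, (fun i => Φ₁ i j) ≠ 0)
    (D' : Matrix (Fin G) (Fin P) ℂ) (hrank : D'.rank ≤ Sa)
    (hcond : 2 * Sa < spark Φ₁ - 1 + D'.rank) :
    Sa + 1 ≤ G :=
  smallest_time_slot_overhead_general Φ₁ hM D' hrank hcond
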